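/- Let ρ₁, ρ₂ > 0, α := 1/ρ₁ − 1/ρ₂, and ρ(c) := ( c/ρ₁ + (1−c)/ρ₂ )⁻¹. Let f₀ : ℝ → ℝ be continuously differentiable and let C : ℝ → ℝ be twice continuously differentiable with C(z)/ρ₁ + (1−C(z))/ρ₂ > 0 for all z ∈ ℝ. Suppose C satisfies, for all z, 0 = f₀'(C(z)) − (1/ρ(C(z)))·(d/dz)( ρ(C(z))·C'(z) ) − α·ρ(C(z))·(C'(z))². Then C''(z) = f₀'(C(z)) for all z ∈ ℝ, and consequently the function z ↦ f₀(C(z)) − (1/2)(C'(z))² is constant on ℝ. -/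

import Mathlib

/-!
Along the profile the density `r = ρ ∘ C` satisfies `r' = -α r² C'`, because `ρ` is the
reciprocal of an affine function of slope `α`. Hence `(1/r)(r C')' = C'' - α r C'²`, the
`α`-term of the equation cancels and what remains is `C'' = f₀'(C)`. Multiplying by `C'` shows
that `f₀(C) - ½ C'²` has zero derivative.
-/

lemma hasDerivAt_harmonic_interpolation {ρ₁ ρ₂ c : ℝ} (hc : c / ρ₁ + (1 - c) / ρ₂ ≠ 0) :
    HasDerivAt (fun c => (c / ρ₁ + (1 - c) / ρ₂)⁻¹)
      (-(1 / ρ₁ - 1 / ρ₂) * ((c / ρ₁ + (1 - c) / ρ₂)⁻¹) ^ 2) c := by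
  have hlin : HasDerivAt (fun c => c / ρ₁ + (1 - c) / ρ₂) (1 / ρ₁ - 1 / ρ₂) c :=
    (((hasDerivAt_id c).div_const ρ₁).add
      (((hasDerivAt_id c).const_sub 1).div_const ρ₂)).congr_deriv (by ring)
  exact (hlin.inv hc).congr_deriv (by rw [inv_pow]; ring)

lemma inv_mul_deriv_mul_add_mul_sq_eq (α : ℝ) {r v : ℝ → ℝ} {z v' : ℝ}
    (hr : HasDerivAt r (-α * r z ^ 2 * v z) z) (hv : HasDerivAt v v' z) (hr0 : r z ≠ 0) :
    1 / r z * deriv (fun w => r w * v w) z + α * r z * v z ^ 2 = v' := by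
  rw [HasDerivAt.deriv (f := fun w => r w * v w) (hr.mul hv)]
  field_simp
  ring

lemma sub_half_deriv_sq_eq_of_deriv_deriv_eq {f C : ℝ → ℝ} (hf : Differentiable ℝ f)
    (hC1 : Differentiable ℝ C) (hC2 : Differentiable ℝ (deriv C))
    (hODE : ∀ z, deriv (deriv C) z = deriv f (C z)) (z w : ℝ) :
    f (C z) - 1 / 2 * deriv C z ^ 2 = f (C w) - 1 / 2 * deriv C w ^ 2 := by
  have hE : ∀ z, HasDerivAt (fun z => f (C z) - 1 / 2 * deriv C z ^ 2) 0 z := by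
    intro z
    refine (((hf (C z)).hasDerivAt.comp z (hC1 z).hasDerivAt).sub
      (((hC2 z).hasDerivAt.pow 2).const_mul (1 / 2))).congr_deriv ?_
    rw [hODE z]
    ring
  exact is_const_of_deriv_eq_zero (fun z => (hE z).differentiableAt) (fun z => (hE z).deriv) z w

theorem llg_profile_reduction_general (ρ₁ ρ₂ : ℝ)
    (α : ℝ) (hα : α = 1/ρ₁ - 1/ρ₂)
    (ρ : ℝ → ℝ) (hρ : ρ = fun c => (c/ρ₁ + (1-c)/ρ₂)⁻¹)
    (f₀ : ℝ → ℝ) (hf₀ : ContDiff ℝ 1 f₀)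
    (C : ℝ → ℝ) (hC : ContDiff ℝ 2 C)
    (hpos : ∀ z : ℝ, 0 < C z / ρ₁ + (1 - C z) / ρ₂)
    (hODE : ∀ z : ℝ, 0 = deriv f₀ (C z)
      - (1 / ρ (C z)) * deriv (fun w => ρ (C w) * deriv C w) z
      - α * ρ (C z) * (deriv C z)^2) :
    (∀ z : ℝ, deriv (deriv C) z = deriv f₀ (C z)) ∧
    (∀ z w : ℝ, f₀ (C z) - (1/2) * (deriv C z)^2
      = f₀ (C w) - (1/2) * (deriv C w)^2) := by
  have hC1 : Differentiable ℝ C := hC.differentiable two_ne_zero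
  have hC2 : Differentiable ℝ (deriv C) := hC.differentiable_deriv_two
  have hprofile : ∀ z, deriv (deriv C) z = deriv f₀ (C z) := by
    intro z
    have hρ0 : ρ (C z) ≠ 0 := by
      rw [hρ]
      exact inv_ne_zero (hpos z).ne'
    have hρC : HasDerivAt (fun w => ρ (C w)) (-α * ρ (C z) ^ 2 * deriv C z) z := by
      subst hρ hα
      exact (hasDerivAt_harmonic_interpolation (hpos z).ne').comp z (hC1 z).hasDerivAt
    have hcancel := inv_mul_deriv_mul_add_mul_sq_eq α hρC (hC2 z).hasDerivAt hρ0
    linarith [hODE z]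
  exact ⟨hprofile, sub_half_deriv_sq_eq_of_deriv_deriv_eq (hf₀.differentiable one_ne_zero) hC1
    hC2 hprofile⟩

/-- Reduction of the Lee–Lowengrub–Goodman inner-profile ODE: the density terms cancel,
so the profile satisfies `C'' = f₀'(C)` and `f₀(C) − (1/2)(C')²` is constant. -/
theorem llg_profile_reduction (ρ₁ ρ₂ : ℝ) (h1 : 0 < ρ₁) (h2 : 0 < ρ₂)
    (α : ℝ) (hα : α = 1/ρ₁ - 1/ρ₂)
    (ρ : ℝ → ℝ) (hρ : ρ = fun c => (c/ρ₁ + (1-c)/ρ₂)⁻¹)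
    (f₀ : ℝ → ℝ) (hf₀ : ContDiff ℝ 1 f₀)
    (C : ℝ → ℝ) (hC : ContDiff ℝ 2 C)
    (hpos : ∀ z : ℝ, 0 < C z / ρ₁ + (1 - C z) / ρ₂)
    (hODE : ∀ z : ℝ, 0 = deriv f₀ (C z)
      - (1 / ρ (C z)) * deriv (fun w => ρ (C w) * deriv C w) z
      - α * ρ (C z) * (deriv C z)^2) :
    (∀ z : ℝ, deriv (deriv C) z = deriv f₀ (C z)) ∧
    (∀ z w : ℝ, f₀ (C z) - (1/2) * (deriv C z)^2
      = f₀ (C w) - (1/2) * (deriv C w)^2) :=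
  llg_profile_reduction_general ρ₁ ρ₂ α hα ρ hρ f₀ hf₀ C hC hpos hODE
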